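/- Let rings A and B be symmetric separably equivalent with context (P, Q, ν, μ). Then the map End({}_BQ) → P ⊗_B Q sending β to Σⱼ pⱼ ⊗ β(qⱼ) is an anti-isomorphism of rings from the endomorphism ring of Q as a left B-module onto P ⊗_B Q with the μ-multiplication. -/

import Mathlib

/-! ### A balanced tensor product of a right module and a left module
over a possibly noncommutative ring, constructed as a quotient of the
`ℤ`-tensor product. -/

open MulOpposite
open scoped TensorProduct

section BalCore

variable (R : Type*) [Ring R] (M : Type*) [AddCommGroup M] [Module Rᵐᵒᵖ M]
  (N : Type*) [AddCommGroup N] [Module R N]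

/-- The subgroup of relations defining the balanced tensor product. -/
def balRel : Submodule ℤ (TensorProduct ℤ M N) :=
  Submodule.span ℤ {x | ∃ (m : M) (r : R) (n : N), x = (op r • m) ⊗ₜ[ℤ] n - m ⊗ₜ[ℤ] (r • n)}

/-- The balanced tensor product `M ⊗[R] N` of a right `R`-module `M` and a
left `R`-module `N`. -/
def Bal : Type _ := TensorProduct ℤ M N ⧸ balRel R M N

noncomputable instance : AddCommGroup (Bal R M N) := Submodule.Quotient.addCommGroup _

variable {M N}

/-- The canonical image of `m ⊗ n` in the balanced tensor product. -/
noncomputable def Bal.tmul (m : M) (n : N) : Bal R M N := Submodule.Quotient.mk (m ⊗ₜ[ℤ] n)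

theorem Bal.add_tmul (m m' : M) (n : N) :
    Bal.tmul R (m + m') n = Bal.tmul R m n + Bal.tmul R m' n := by
  show Submodule.Quotient.mk _ = _
  rw [TensorProduct.add_tmul]
  rfl

theorem Bal.tmul_add (m : M) (n n' : N) :
    Bal.tmul R m (n + n') = Bal.tmul R m n + Bal.tmul R m n' := by
  show Submodule.Quotient.mk _ = _
  rw [TensorProduct.tmul_add]
  rfl

theorem Bal.zero_tmul (n : N) : Bal.tmul R (0 : M) n = 0 := by
  show Submodule.Quotient.mk _ = _
  rw [TensorProduct.zero_tmul]
  rfl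

theorem Bal.tmul_zero (m : M) : Bal.tmul R m (0 : N) = 0 := by
  show Submodule.Quotient.mk _ = _
  rw [TensorProduct.tmul_zero]
  rfl

/-- The fundamental balancing relation `(m · r) ⊗ n = m ⊗ (r · n)`. -/
theorem Bal.op_smul_tmul (m : M) (r : R) (n : N) :
    Bal.tmul R (op r • m) n = Bal.tmul R m (r • n) :=
  (Submodule.Quotient.eq _).2 (Submodule.subset_span ⟨m, r, n, rfl⟩)

theorem Bal.induction_on {C : Bal R M N → Prop} (x : Bal R M N) (zero : C 0)
    (tmul : ∀ m n, C (Bal.tmul R m n)) (add : ∀ x y, C x → C y → C (x + y)) : C x := by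
  obtain ⟨y, rfl⟩ := Submodule.Quotient.mk_surjective _ x
  induction y using TensorProduct.induction_on with
  | zero => exact zero
  | tmul m n => exact tmul m n
  | add a b ha hb =>
      have : (Submodule.Quotient.mk (a + b) : Bal R M N)
          = Submodule.Quotient.mk a + Submodule.Quotient.mk b := rfl
      rw [this]; exact add _ _ ha hb

/-- Lift a balanced biadditive map to the balanced tensor product. -/
noncomputable def Bal.liftFun {T : Type*} [AddCommGroup T] (f : M → N → T)
    (h1 : ∀ m m' n, f (m + m') n = f m n + f m' n)
    (h2 : ∀ m n n', f m (n + n') = f m n + f m n')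
    (h3 : ∀ (m : M) (r : R) (n : N), f (op r • m) n = f m (r • n)) : Bal R M N →+ T :=
  letI f₂ : M →+ N →+ T :=
    AddMonoidHom.mk' (fun m => AddMonoidHom.mk' (f m) (h2 m))
      (fun m m' => AddMonoidHom.ext fun n => h1 m m' n)
  letI bil : M →ₗ[ℤ] N →ₗ[ℤ] T :=
    { toFun := fun m => (f₂ m).toIntLinearMap
      map_add' := fun m m' => LinearMap.ext fun n => by simp
      map_smul' := fun z m => LinearMap.ext fun n => by
        simp [map_zsmul] }
  ((balRel R M N).liftQ (TensorProduct.lift bil) (by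
    rw [balRel, Submodule.span_le]
    rintro x ⟨m, r, n, rfl⟩
    simp only [SetLike.mem_coe]
    change TensorProduct.lift bil _ = 0
    simp [bil, f₂, h3 m r n])).toAddMonoidHom

@[simp] theorem Bal.liftFun_tmul {T : Type*} [AddCommGroup T] (f : M → N → T)
    (h1 : ∀ m m' n, f (m + m') n = f m n + f m' n)
    (h2 : ∀ m n n', f m (n + n') = f m n + f m n')
    (h3 : ∀ (m : M) (r : R) (n : N), f (op r • m) n = f m (r • n)) (m : M) (n : N) :
    Bal.liftFun R f h1 h2 h3 (Bal.tmul R m n) = f m n := by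
  simp [Bal.liftFun, Bal.tmul, Submodule.Quotient.mk]
  rfl

theorem Bal.addHom_ext {T : Type*} [AddCommGroup T] {f g : Bal R M N →+ T}
    (h : ∀ m n, f (Bal.tmul R m n) = g (Bal.tmul R m n)) : f = g := by
  ext x
  refine Bal.induction_on R (C := fun z => f z = g z) x (by simp) h
    (fun x y hx hy => by simp only [map_add]; rw [hx, hy])

end BalCore
section BalModule

variable (R : Type*) [Ring R] {M : Type*} [AddCommGroup M] [Module Rᵐᵒᵖ M]
  {N : Type*} [AddCommGroup N] [Module R N]

section Left

variable {S : Type*} [Ring S] [Module S M] [SMulCommClass S Rᵐᵒᵖ M]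

/-- The left action on the balanced tensor product through the first factor. -/
noncomputable def Bal.lsmulHom (s : S) : Bal R M N →+ Bal R M N :=
  Bal.liftFun R (fun m n => Bal.tmul R (s • m) n)
    (fun m m' n => by
      show Bal.tmul R (s • (m + m')) n = Bal.tmul R (s • m) n + Bal.tmul R (s • m') n
      rw [smul_add, Bal.add_tmul])
    (fun m n n' => Bal.tmul_add R _ n n')
    (fun m r n => by
      show Bal.tmul R (s • op r • m) n = Bal.tmul R (s • m) (r • n)
      rw [smul_comm, Bal.op_smul_tmul])

theorem Bal.lsmulHom_tmul (s : S) (m : M) (n : N) :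
    Bal.lsmulHom R (M := M) (N := N) s (Bal.tmul R m n) = Bal.tmul R (s • m) n :=
  Bal.liftFun_tmul R _ _ _ _ m n

noncomputable instance : SMul S (Bal R M N) := ⟨fun s x => Bal.lsmulHom R s x⟩

theorem Bal.lsmul_tmul (s : S) (m : M) (n : N) :
    s • Bal.tmul R m n = Bal.tmul R (s • m) n :=
  Bal.lsmulHom_tmul R s m n

theorem Bal.lsmul_one : Bal.lsmulHom R (M := M) (N := N) (1 : S) = AddMonoidHom.id _ :=
  Bal.addHom_ext R fun m n => by
    rw [Bal.lsmulHom_tmul, one_smul, AddMonoidHom.id_apply]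

theorem Bal.lsmul_mul (s t : S) :
    Bal.lsmulHom R (M := M) (N := N) (s * t) = (Bal.lsmulHom R s).comp (Bal.lsmulHom R t) :=
  Bal.addHom_ext R fun m n => by
    rw [AddMonoidHom.comp_apply, Bal.lsmulHom_tmul, Bal.lsmulHom_tmul, Bal.lsmulHom_tmul,
      mul_smul]

theorem Bal.lsmul_addsmul (s t : S) :
    Bal.lsmulHom R (M := M) (N := N) (s + t) = Bal.lsmulHom R s + Bal.lsmulHom R t :=
  Bal.addHom_ext R fun m n => by
    rw [AddMonoidHom.add_apply, Bal.lsmulHom_tmul, Bal.lsmulHom_tmul, Bal.lsmulHom_tmul,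
      add_smul, Bal.add_tmul]

theorem Bal.lsmul_zerosmul : Bal.lsmulHom R (M := M) (N := N) (0 : S) = 0 :=
  Bal.addHom_ext R fun m n => by
    rw [Bal.lsmulHom_tmul, zero_smul, Bal.zero_tmul, AddMonoidHom.zero_apply]

noncomputable instance : Module S (Bal R M N) where
  one_smul x := DFunLike.congr_fun (Bal.lsmul_one R (M := M) (N := N) (S := S)) x
  mul_smul s t x := DFunLike.congr_fun (Bal.lsmul_mul R s t) x
  smul_zero s := (Bal.lsmulHom R (M := M) (N := N) s).map_zero
  smul_add s x y := (Bal.lsmulHom R s).map_add x y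
  add_smul s t x := DFunLike.congr_fun (Bal.lsmul_addsmul R s t) x
  zero_smul x := DFunLike.congr_fun (Bal.lsmul_zerosmul R (M := M) (N := N) (S := S)) x

end Left

section Right

variable {S : Type*} [Ring S] [Module Sᵐᵒᵖ N] [SMulCommClass R Sᵐᵒᵖ N]

/-- The right action on the balanced tensor product through the second factor. -/
noncomputable def Bal.rsmulHom (s : Sᵐᵒᵖ) : Bal R M N →+ Bal R M N :=
  Bal.liftFun R (fun m n => Bal.tmul R m (s • n))
    (fun m m' n => Bal.add_tmul R m m' _)
    (fun m n n' => by
      show Bal.tmul R m (s • (n + n')) = Bal.tmul R m (s • n) + Bal.tmul R m (s • n')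
      rw [smul_add, Bal.tmul_add])
    (fun m r n => by
      show Bal.tmul R (op r • m) (s • n) = Bal.tmul R m (s • r • n)
      rw [Bal.op_smul_tmul, smul_comm])

theorem Bal.rsmulHom_tmul (s : Sᵐᵒᵖ) (m : M) (n : N) :
    Bal.rsmulHom R (M := M) (N := N) s (Bal.tmul R m n) = Bal.tmul R m (s • n) :=
  Bal.liftFun_tmul R _ _ _ _ m n

noncomputable instance : SMul Sᵐᵒᵖ (Bal R M N) := ⟨fun s x => Bal.rsmulHom R s x⟩

theorem Bal.rsmul_tmul (s : Sᵐᵒᵖ) (m : M) (n : N) :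
    s • Bal.tmul R m n = Bal.tmul R m (s • n) :=
  Bal.rsmulHom_tmul R s m n

theorem Bal.rsmul_one : Bal.rsmulHom R (M := M) (N := N) (1 : Sᵐᵒᵖ) = AddMonoidHom.id _ :=
  Bal.addHom_ext R fun m n => by
    rw [Bal.rsmulHom_tmul, one_smul, AddMonoidHom.id_apply]

theorem Bal.rsmul_mul (s t : Sᵐᵒᵖ) :
    Bal.rsmulHom R (M := M) (N := N) (s * t) = (Bal.rsmulHom R s).comp (Bal.rsmulHom R t) :=
  Bal.addHom_ext R fun m n => by
    rw [AddMonoidHom.comp_apply, Bal.rsmulHom_tmul, Bal.rsmulHom_tmul, Bal.rsmulHom_tmul,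
      mul_smul]

theorem Bal.rsmul_addsmul (s t : Sᵐᵒᵖ) :
    Bal.rsmulHom R (M := M) (N := N) (s + t) = Bal.rsmulHom R s + Bal.rsmulHom R t :=
  Bal.addHom_ext R fun m n => by
    rw [AddMonoidHom.add_apply, Bal.rsmulHom_tmul, Bal.rsmulHom_tmul, Bal.rsmulHom_tmul,
      add_smul, Bal.tmul_add]

theorem Bal.rsmul_zerosmul : Bal.rsmulHom R (M := M) (N := N) (0 : Sᵐᵒᵖ) = 0 :=
  Bal.addHom_ext R fun m n => by
    rw [Bal.rsmulHom_tmul, zero_smul, Bal.tmul_zero, AddMonoidHom.zero_apply]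

noncomputable instance : Module Sᵐᵒᵖ (Bal R M N) where
  one_smul x := DFunLike.congr_fun (Bal.rsmul_one R (M := M) (N := N) (S := S)) x
  mul_smul s t x := DFunLike.congr_fun (Bal.rsmul_mul R s t) x
  smul_zero s := (Bal.rsmulHom R (M := M) (N := N) s).map_zero
  smul_add s x y := (Bal.rsmulHom R s).map_add x y
  add_smul s t x := DFunLike.congr_fun (Bal.rsmul_addsmul R s t) x
  zero_smul x := DFunLike.congr_fun (Bal.rsmul_zerosmul R (M := M) (N := N) (S := S)) x

end Right

end BalModule

/-! Write `⟨q, p⟩ = μ (q ⊗ p)`. The identities `Σⱼ ⟨q, pⱼ⟩ qⱼ = q` and `Σⱼ pⱼ ⟨qⱼ, p⟩ = p` say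
that `(pⱼ, qⱼ)` is a dual basis for `Q` with respect to this pairing, so
`β ↦ Σⱼ pⱼ ⊗ β(qⱼ)` has the inverse `p ⊗ q' ↦ (q ↦ ⟨q, p⟩ q')`. Expanding
`γ(qⱼ) = Σₗ ⟨γ(qⱼ), pₗ⟩ qₗ` inside `Σⱼ pⱼ ⊗ β(γ(qⱼ))` and moving the scalar across the tensor
sign produces exactly the `μ`-product of the images of `γ` and `β`, in that order. -/

namespace Bal

variable (R : Type*) [Ring R] {M : Type*} [AddCommGroup M] [Module Rᵐᵒᵖ M]
  {N : Type*} [AddCommGroup N] [Module R N]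

noncomputable def tmulHom : M →+ N →+ Bal R M N :=
  AddMonoidHom.mk' (fun m => AddMonoidHom.mk' (tmul R m) (tmul_add R m))
    fun m m' => AddMonoidHom.ext (add_tmul R m m')

theorem sum_tmul {ι : Type*} (s : Finset ι) (f : ι → M) (n : N) :
    tmul R (∑ i ∈ s, f i) n = ∑ i ∈ s, tmul R (f i) n :=
  map_sum ((tmulHom R).flip n) f s

theorem tmul_sum {ι : Type*} (m : M) (s : Finset ι) (g : ι → N) :
    tmul R m (∑ i ∈ s, g i) = ∑ i ∈ s, tmul R m (g i) :=
  map_sum (tmulHom R m) g s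

end Bal

section DualBasis

variable {B P Q : Type*} [Ring B] [AddCommGroup P] [Module Bᵐᵒᵖ P] [AddCommGroup Q] [Module B Q]
  {ι : Type*} [Fintype ι] (pj : ι → P) (qj : ι → Q)

noncomputable def endToTensor : Module.End B Q →+ Bal B P Q where
  toFun β := ∑ j, Bal.tmul B (pj j) (β (qj j))
  map_zero' := by simp only [LinearMap.zero_apply, Bal.tmul_zero, Finset.sum_const_zero]
  map_add' β γ := by
    simp only [LinearMap.add_apply, Bal.tmul_add, Finset.sum_add_distrib]

theorem endToTensor_apply (β : Module.End B Q) :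
    endToTensor pj qj β = ∑ j, Bal.tmul B (pj j) (β (qj j)) :=
  rfl

variable (pair : Q →+ P →+ B) (hl : ∀ (b : B) q p, pair (b • q) p = b * pair q p)
  (hr : ∀ (b : B) q p, pair q (op b • p) = pair q p * b)

def pairFunctional (p : P) : Q →ₗ[B] B where
  toFun q := pair q p
  map_add' q₁ q₂ := by simp only [map_add, AddMonoidHom.add_apply]
  map_smul' b q := hl b q p

noncomputable def tensorToEnd : Bal B P Q →+ Module.End B Q :=
  Bal.liftFun B (fun p q' => (pairFunctional pair hl p).smulRight q')
    (fun p p' q' => LinearMap.ext fun q => by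
      simp [pairFunctional, add_smul])
    (fun p q₁ q₂ => LinearMap.ext fun q => by
      simp [smul_add])
    (fun p b q' => LinearMap.ext fun q => by
      simp [pairFunctional, hr, mul_smul])

theorem tensorToEnd_tmul_apply (p : P) (q' q : Q) :
    tensorToEnd pair hl hr (Bal.tmul B p q') q = pair q p • q' := by
  simp [tensorToEnd, pairFunctional]

variable {pj qj}

theorem tensorToEnd_endToTensor (h_q : ∀ q, ∑ j, pair q (pj j) • qj j = q)
    (β : Module.End B Q) : tensorToEnd pair hl hr (endToTensor pj qj β) = β := by
  ext q
  calc tensorToEnd pair hl hr (endToTensor pj qj β) q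
      = ∑ j, pair q (pj j) • β (qj j) := by
        simp only [endToTensor_apply, map_sum, LinearMap.sum_apply, tensorToEnd_tmul_apply]
    _ = β (∑ j, pair q (pj j) • qj j) := by simp only [map_sum, map_smul]
    _ = β q := by rw [h_q]

theorem endToTensor_tensorToEnd (h_p : ∀ p, ∑ j, op (pair (qj j) p) • pj j = p)
    (x : Bal B P Q) : endToTensor pj qj (tensorToEnd pair hl hr x) = x := by
  refine DFunLike.congr_fun (Bal.addHom_ext B
    (f := (endToTensor pj qj).comp (tensorToEnd pair hl hr)) (g := AddMonoidHom.id _)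
    fun p q' => ?_) x
  calc ∑ j, Bal.tmul B (pj j) (tensorToEnd pair hl hr (Bal.tmul B p q') (qj j))
      = ∑ j, Bal.tmul B (op (pair (qj j) p) • pj j) q' := by
        simp only [tensorToEnd_tmul_apply, Bal.op_smul_tmul]
    _ = Bal.tmul B p q' := by rw [← Bal.sum_tmul, h_p]

theorem endToTensor_bijective (hl : ∀ (b : B) q p, pair (b • q) p = b * pair q p)
    (hr : ∀ (b : B) q p, pair q (op b • p) = pair q p * b)
    (h_q : ∀ q, ∑ j, pair q (pj j) • qj j = q)
    (h_p : ∀ p, ∑ j, op (pair (qj j) p) • pj j = p) :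
    Function.Bijective (endToTensor (B := B) pj qj) :=
  Function.bijective_iff_has_inverse.2 ⟨tensorToEnd pair hl hr,
    tensorToEnd_endToTensor pair hl hr h_q, endToTensor_tensorToEnd pair hl hr h_p⟩

variable (mul : Bal B P Q →+ Bal B P Q →+ Bal B P Q)

/-- `mul` is the `μ`-multiplication `(p ⊗ q) (p' ⊗ q') = p ⟨q, p'⟩ ⊗ q'`. -/
def IsPairingMul : Prop :=
  ∀ (p p' : P) (q q' : Q),
    mul (Bal.tmul B p q) (Bal.tmul B p' q') = Bal.tmul B (op (pair q p') • p) q'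

theorem endToTensor_mul
    (hmul : IsPairingMul pair mul)
    (h_q : ∀ q, ∑ j, pair q (pj j) • qj j = q) (β γ : Module.End B Q) :
    endToTensor pj qj (β * γ) = mul (endToTensor pj qj γ) (endToTensor pj qj β) := by
  have h_summand (j) : Bal.tmul B (pj j) (β (γ (qj j)))
      = mul (Bal.tmul B (pj j) (γ (qj j))) (endToTensor pj qj β) := by
    conv_lhs => rw [← h_q (γ (qj j))]
    simp only [endToTensor_apply, map_sum, map_smul, Bal.tmul_sum, hmul _ _ _ _,
      Bal.op_smul_tmul]
  simp only [endToTensor_apply pj qj γ, map_sum, AddMonoidHom.finsetSum_apply, ← h_summand]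
  rfl

theorem endToTensor_one_mul
    (hmul : IsPairingMul pair mul)
    (h_p : ∀ p, ∑ j, op (pair (qj j) p) • pj j = p)
    (x : Bal B P Q) : mul (endToTensor pj qj 1) x = x := by
  refine DFunLike.congr_fun (Bal.addHom_ext B (g := AddMonoidHom.id _) fun p q => ?_) x
  simp only [endToTensor_apply, Module.End.one_apply, map_sum, AddMonoidHom.finsetSum_apply,
    hmul _ _ _ _, ← Bal.sum_tmul, h_p, AddMonoidHom.id_apply]

theorem mul_endToTensor_one
    (hmul : IsPairingMul pair mul)
    (h_q : ∀ q, ∑ j, pair q (pj j) • qj j = q)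
    (x : Bal B P Q) : mul x (endToTensor pj qj 1) = x := by
  refine DFunLike.congr_fun (Bal.addHom_ext B (f := mul.flip _) (g := AddMonoidHom.id _)
    fun p q => ?_) x
  rw [AddMonoidHom.flip_apply]
  simp only [endToTensor_apply, Module.End.one_apply, map_sum, hmul _ _ _ _, Bal.op_smul_tmul,
    ← Bal.tmul_sum, h_q, AddMonoidHom.id_apply]

end DualBasis

theorem end_Q_anti_isomorphism_general
    {A B P Q : Type*} [Ring A] [Ring B]
    [AddCommGroup P] [Module A P] [Module Bᵐᵒᵖ P] [SMulCommClass A Bᵐᵒᵖ P]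
    [AddCommGroup Q] [Module B Q] [Module Aᵐᵒᵖ Q] [SMulCommClass B Aᵐᵒᵖ Q]
    (μ : Bal A Q P →+ B)
    (hμl : ∀ (b : B) (y : Bal A Q P), μ (b • y) = b * μ y)
    (hμr : ∀ (b : B) (y : Bal A Q P), μ (op b • y) = μ y * b)
    (n : ℕ) (p' : Fin n → P)
    (k : ℕ) (pj : Fin k → P) (qj : Fin k → Q)
    (adj3 : ∀ q : Q, ∑ j, μ (Bal.tmul A q (pj j)) • qj j = q)
    (adj4 : ∀ p : P, ∑ j, op (μ (Bal.tmul A (qj j) p)) • pj j = p)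
    :
    ∀ mul : Bal B P Q → Bal B P Q → Bal B P Q,
      (∀ x y z : Bal B P Q, mul (x + y) z = mul x z + mul y z) →
      (∀ x y z : Bal B P Q, mul x (y + z) = mul x y + mul x z) →
      (∀ (p p' : P) (q q'' : Q),
        mul (Bal.tmul B p q) (Bal.tmul B p' q'')
          = Bal.tmul B (op (μ (Bal.tmul A q p')) • p) q'') →
      (Function.Bijective
        (fun β : Module.End B Q => ∑ j, Bal.tmul B (pj j) (β (qj j))) ∧
       (∀ β γ : Module.End B Q,
         ∑ j, Bal.tmul B (pj j) ((β + γ) (qj j))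
           = (∑ j, Bal.tmul B (pj j) (β (qj j))) + ∑ j, Bal.tmul B (pj j) (γ (qj j))) ∧
       (∀ β γ : Module.End B Q,
         ∑ j, Bal.tmul B (pj j) ((β * γ) (qj j))
           = mul (∑ j, Bal.tmul B (pj j) (γ (qj j))) (∑ j, Bal.tmul B (pj j) (β (qj j)))) ∧
       (∀ x : Bal B P Q,
         mul (∑ j, Bal.tmul B (pj j) ((1 : Module.End B Q) (qj j))) x = x ∧
         mul x (∑ j, Bal.tmul B (pj j) ((1 : Module.End B Q) (qj j))) = x)) := by
  intro mul hadd_mul hmul_add hmul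
  let pair : Q →+ P →+ B := (Bal.tmulHom A).compr₂ μ
  have hl (b : B) q p : pair (b • q) p = b * pair q p := by
    show μ (Bal.tmul A (b • q) p) = _
    rw [← Bal.lsmul_tmul, hμl]; rfl
  have hr (b : B) q p : pair q (op b • p) = pair q p * b := by
    show μ (Bal.tmul A q (op b • p)) = _
    rw [← Bal.rsmul_tmul, hμr]; rfl
  let mulHom : Bal B P Q →+ Bal B P Q →+ Bal B P Q :=
    AddMonoidHom.mk' (fun x => AddMonoidHom.mk' (mul x) (hmul_add x))
      fun x y => AddMonoidHom.ext (hadd_mul x y)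
  exact ⟨endToTensor_bijective pair hl hr adj3 adj4, map_add (endToTensor pj qj),
    endToTensor_mul pair mulHom hmul adj3,
    fun x => ⟨endToTensor_one_mul pair mulHom hmul adj4 x,
      mul_endToTensor_one pair mulHom hmul adj3 x⟩⟩

/-- For symmetric separably equivalent rings with context `(P,Q,ν,μ)`,
the map `β ↦ Σⱼ pⱼ ⊗ β(qⱼ)` is an anti-isomorphism of rings from `End({}_B Q)` onto
`P ⊗[B] Q` with the `μ`-multiplication. -/
theorem end_Q_anti_isomorphism
    {A B P Q : Type*} [Ring A] [Ring B]
    [AddCommGroup P] [Module A P] [Module Bᵐᵒᵖ P] [SMulCommClass A Bᵐᵒᵖ P]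
    [AddCommGroup Q] [Module B Q] [Module Aᵐᵒᵖ Q] [SMulCommClass B Aᵐᵒᵖ Q]
    [Module.Finite A P] [Module.Projective A P]
    [Module.Finite Bᵐᵒᵖ P] [Module.Projective Bᵐᵒᵖ P]
    [Module.Finite B Q] [Module.Projective B Q]
    [Module.Finite Aᵐᵒᵖ Q] [Module.Projective Aᵐᵒᵖ Q]
    (ν : Bal B P Q →+ A)
    (hνl : ∀ (a : A) (x : Bal B P Q), ν (a • x) = a * ν x)
    (hνr : ∀ (a : A) (x : Bal B P Q), ν (op a • x) = ν x * a)
    (hνsurj : Function.Surjective ν)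
    (hνsplit : ∃ σ : A →+ Bal B P Q,
      (∀ (a c : A), σ (a * c) = a • σ c) ∧ (∀ (a c : A), σ (c * a) = op a • σ c) ∧
      ∀ a : A, ν (σ a) = a)
    (μ : Bal A Q P →+ B)
    (hμl : ∀ (b : B) (y : Bal A Q P), μ (b • y) = b * μ y)
    (hμr : ∀ (b : B) (y : Bal A Q P), μ (op b • y) = μ y * b)
    (hμsurj : Function.Surjective μ)
    (hμsplit : ∃ τ : B →+ Bal A Q P,
      (∀ (b c : B), τ (b * c) = b • τ c) ∧ (∀ (b c : B), τ (c * b) = op b • τ c) ∧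
      ∀ b : B, μ (τ b) = b)
    (n : ℕ) (q' : Fin n → Q) (p' : Fin n → P)
    (adj1 : ∀ p : P, ∑ i, ν (Bal.tmul B p (q' i)) • p' i = p)
    (adj2 : ∀ q : Q, ∑ i, op (ν (Bal.tmul B (p' i) q)) • q' i = q)
    (k : ℕ) (pj : Fin k → P) (qj : Fin k → Q)
    (adj3 : ∀ q : Q, ∑ j, μ (Bal.tmul A q (pj j)) • qj j = q)
    (adj4 : ∀ p : P, ∑ j, op (μ (Bal.tmul A (qj j) p)) • pj j = p)
    :
    ∀ mul : Bal B P Q → Bal B P Q → Bal B P Q,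
      (∀ x y z : Bal B P Q, mul (x + y) z = mul x z + mul y z) →
      (∀ x y z : Bal B P Q, mul x (y + z) = mul x y + mul x z) →
      (∀ (p p' : P) (q q'' : Q),
        mul (Bal.tmul B p q) (Bal.tmul B p' q'')
          = Bal.tmul B (op (μ (Bal.tmul A q p')) • p) q'') →
      (Function.Bijective
        (fun β : Module.End B Q => ∑ j, Bal.tmul B (pj j) (β (qj j))) ∧
       (∀ β γ : Module.End B Q,
         ∑ j, Bal.tmul B (pj j) ((β + γ) (qj j))
           = (∑ j, Bal.tmul B (pj j) (β (qj j))) + ∑ j, Bal.tmul B (pj j) (γ (qj j))) ∧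
       (∀ β γ : Module.End B Q,
         ∑ j, Bal.tmul B (pj j) ((β * γ) (qj j))
           = mul (∑ j, Bal.tmul B (pj j) (γ (qj j))) (∑ j, Bal.tmul B (pj j) (β (qj j)))) ∧
       (∀ x : Bal B P Q,
         mul (∑ j, Bal.tmul B (pj j) ((1 : Module.End B Q) (qj j))) x = x ∧
         mul x (∑ j, Bal.tmul B (pj j) ((1 : Module.End B Q) (qj j))) = x)) :=
  end_Q_anti_isomorphism_general μ hμl hμr n p' k pj qj adj3 adj4
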